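/- arXiv:2602.17107 — 3 statements merged into one kernel-verified Lean document; each statement's English description precedes it below -/
import Mathlib

section
/- Symmetry axiom for the Shapley value: if players i, j ∈ N (i ≠ j) satisfy v(S ∪ {i}) = v(S ∪ {j}) for every subset S ⊆ N \ {i, j}, then φ_i(v) = φ_j(v). -/
/-- Symmetry axiom for the Shapley value. -/
theorem shapley_symmetry {α : Type*} [DecidableEq α]
    (N : Finset α) (v : Finset α → ℝ) (i j : α)
    (hi : i ∈ N) (hj : j ∈ N) (hij : i ≠ j)
    (hsym : ∀ S ⊆ (N.erase i).erase j, v (insert i S) = v (insert j S)) :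
    ∑ S ∈ (N.erase i).powerset,
        (1 : ℝ) / (N.card * (N.card - 1).choose S.card) * (v (insert i S) - v S)
      = ∑ S ∈ (N.erase j).powerset,
        (1 : ℝ) / (N.card * (N.card - 1).choose S.card) * (v (insert j S) - v S) := by
  refine Finset.sum_nbij'
    (fun S => if j ∈ S then insert i (S.erase j) else S)
    (fun S => if i ∈ S then insert j (S.erase i) else S) ?_ ?_ ?_ ?_ ?_
  · intro S hS
    simp only [Finset.mem_powerset, Finset.subset_erase] at hS ⊢
    obtain ⟨hSN, hiS⟩ := hS
    by_cases hjS : j ∈ S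
    · rw [if_pos hjS]
      refine ⟨Finset.insert_subset hi ((Finset.erase_subset _ _).trans hSN), ?_⟩
      simp [hij.symm, Finset.mem_erase]
    · rw [if_neg hjS]; exact ⟨hSN, hjS⟩
  · intro S hS
    simp only [Finset.mem_powerset, Finset.subset_erase] at hS ⊢
    obtain ⟨hSN, hjS⟩ := hS
    by_cases hiS : i ∈ S
    · rw [if_pos hiS]
      refine ⟨Finset.insert_subset hj ((Finset.erase_subset _ _).trans hSN), ?_⟩
      simp [hij, Finset.mem_erase]
    · rw [if_neg hiS]; exact ⟨hSN, hiS⟩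
  · intro S hS
    simp only [Finset.mem_powerset, Finset.subset_erase] at hS
    obtain ⟨hSN, hiS⟩ := hS
    beta_reduce
    by_cases hjS : j ∈ S
    · have hij' : i ∉ S.erase j := fun h => hiS (Finset.mem_of_mem_erase h)
      rw [if_pos hjS, if_pos (Finset.mem_insert_self i _), Finset.erase_insert hij',
        Finset.insert_erase hjS]
    · rw [if_neg hjS, if_neg hiS]
  · intro S hS
    simp only [Finset.mem_powerset, Finset.subset_erase] at hS
    obtain ⟨hSN, hjS⟩ := hS
    beta_reduce
    by_cases hiS : i ∈ S
    · have hji' : j ∉ S.erase i := fun h => hjS (Finset.mem_of_mem_erase h)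
      rw [if_pos hiS, if_pos (Finset.mem_insert_self j _), Finset.erase_insert hji',
        Finset.insert_erase hiS]
    · rw [if_neg hiS, if_neg hjS]
  · intro S hS
    simp only [Finset.mem_powerset, Finset.subset_erase] at hS
    obtain ⟨hSN, hiS⟩ := hS
    beta_reduce
    by_cases hjS : j ∈ S
    · rw [if_pos hjS]
      have hT : S.erase j ⊆ (N.erase i).erase j := by
        intro x hx
        simp only [Finset.mem_erase] at hx ⊢
        exact ⟨hx.1, fun h => hiS (h ▸ hx.2), hSN hx.2⟩
      have hij' : i ∉ S.erase j := fun h => hiS (Finset.mem_of_mem_erase h)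
      have hpos : 1 ≤ S.card := Finset.card_pos.mpr ⟨j, hjS⟩
      have hcard : (insert i (S.erase j)).card = S.card := by
        rw [Finset.card_insert_of_notMem hij', Finset.card_erase_of_mem hjS]
        omega
      have hv1 : v S = v (insert i (S.erase j)) := by
        conv_lhs => rw [← Finset.insert_erase hjS]
        rw [← hsym _ hT]
      have hv2 : v (insert i S) = v (insert j (insert i (S.erase j))) := by
        rw [Finset.insert_comm, Finset.insert_erase hjS]
      rw [hcard, ← hv1, ← hv2]
    · rw [if_neg hjS]
      have hT : S ⊆ (N.erase i).erase j := Finset.subset_erase.mpr ⟨Finset.subset_erase.mpr ⟨hSN, hiS⟩, hjS⟩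
      rw [hsym _ hT]
end

section
/- Efficiency of the Owen value: for a cooperative game v : 2^N → ℝ and a partition {G₁,…,G_K} of N, the Owen values φ_i^O, defined for i ∈ G_k by φ_i^O = ∑_{T ⊆ {1..K}\{k}} ∑_{S ⊆ G_k\{i}} [1/(K·C(K-1,|T|))]·[1/(|G_k|·C(|G_k|-1,|S|))]·(v((∪_{j∈T} G_j) ∪ S ∪ {i}) − v((∪_{j∈T} G_j) ∪ S)), satisfy ∑_{i ∈ N} φ_i^O = v(N) − v(∅). -/
open Finset

lemma shapley_eff {α : Type*} [DecidableEq α] (M : Finset α) (hM : M.Nonempty)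
    (w : Finset α → ℝ) :
    ∑ i ∈ M, ∑ S ∈ (M.erase i).powerset,
      ((1 : ℝ) / (M.card * (M.card - 1).choose S.card)) * (w (S ∪ {i}) - w S)
      = w M - w ∅ := by
  classical
  set n := M.card with hn
  set a : ℕ → ℝ := fun s => (1 : ℝ) / (n * (n - 1).choose s) with ha
  have hpe : ∀ i : α, (M.erase i).powerset = M.powerset.filter (fun S => i ∉ S) := by
    intro i; ext S; simp [Finset.subset_erase, and_comm]
  have pos : ∑ i ∈ M, ∑ S ∈ (M.erase i).powerset, a S.card * w (S ∪ {i})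
      = ∑ C ∈ M.powerset, (C.card : ℝ) * (a (C.card - 1) * w C) := by
    have h1 : ∀ i ∈ M, ∑ S ∈ (M.erase i).powerset, a S.card * w (S ∪ {i})
        = ∑ C ∈ M.powerset, if i ∈ C then a (C.card - 1) * w C else 0 := by
      intro i hi
      rw [← Finset.sum_filter]
      refine Finset.sum_bij' (fun S _ => insert i S) (fun C _ => C.erase i) ?_ ?_ ?_ ?_ ?_
      · intro S hS
        rw [Finset.mem_powerset] at hS
        rw [Finset.subset_erase] at hS
        simp only [Finset.mem_filter, Finset.mem_powerset]
        exact ⟨Finset.insert_subset hi hS.1, Finset.mem_insert_self _ _⟩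
      · intro C hC
        simp only [Finset.mem_filter, Finset.mem_powerset] at hC ⊢
        exact Finset.erase_subset_erase _ hC.1
      · intro S hS
        rw [Finset.mem_powerset, Finset.subset_erase] at hS
        exact Finset.erase_insert hS.2
      · intro C hC
        simp only [Finset.mem_filter] at hC
        exact Finset.insert_erase hC.2
      · intro S hS
        rw [Finset.mem_powerset, Finset.subset_erase] at hS
        have he : S ∪ {i} = insert i S := by rw [Finset.insert_eq, Finset.union_comm]
        simp only [he, Finset.card_insert_of_notMem hS.2, Nat.add_sub_cancel]
    rw [Finset.sum_congr rfl h1, Finset.sum_comm]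
    refine Finset.sum_congr rfl fun C hC => ?_
    rw [Finset.sum_ite_mem, Finset.inter_eq_right.mpr (Finset.mem_powerset.mp hC),
      Finset.sum_const, nsmul_eq_mul]
  have neg : ∑ i ∈ M, ∑ S ∈ (M.erase i).powerset, a S.card * w S
      = ∑ S ∈ M.powerset, ((n : ℝ) - S.card) * (a S.card * w S) := by
    simp_rw [hpe, Finset.sum_filter]
    rw [Finset.sum_comm]
    refine Finset.sum_congr rfl fun S hS => ?_
    have hSM : S ⊆ M := Finset.mem_powerset.mp hS
    have : ∀ i : α, (if i ∉ S then a S.card * w S else 0)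
        = a S.card * w S - (if i ∈ S then a S.card * w S else 0) := by
      intro i; by_cases h : i ∈ S <;> simp [h]
    simp_rw [this]
    rw [Finset.sum_sub_distrib, Finset.sum_const, Finset.sum_ite_mem,
      Finset.inter_eq_right.mpr hSM, Finset.sum_const, nsmul_eq_mul, nsmul_eq_mul]
    have hcard : S.card ≤ n := Finset.card_le_card hSM
    ring
  have split : ∑ i ∈ M, ∑ S ∈ (M.erase i).powerset,
      a S.card * (w (S ∪ {i}) - w S)
      = ∑ C ∈ M.powerset,
          ((C.card : ℝ) * a (C.card - 1) - ((n : ℝ) - C.card) * a C.card) * w C := by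
    simp_rw [mul_sub, Finset.sum_sub_distrib]
    rw [pos, neg, ← Finset.sum_sub_distrib]
    exact Finset.sum_congr rfl fun C _ => by ring
  have hn1 : 1 ≤ n := hM.card_pos
  have hn0 : (n : ℝ) ≠ 0 := Nat.cast_ne_zero.mpr (by omega)
  have key : ∀ C ∈ M.powerset,
      ((C.card : ℝ) * a (C.card - 1) - ((n : ℝ) - C.card) * a C.card) * w C
      = (if C = M then w M else 0) - (if C = ∅ then w ∅ else 0) := by
    intro C hC
    have hCM : C ⊆ M := Finset.mem_powerset.mp hC
    by_cases h1 : C = M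
    · have hne' : C ≠ ∅ := by rw [h1]; exact hM.ne_empty
      rw [if_pos h1, if_neg hne']
      have hcard : C.card = n := by rw [h1]
      rw [hcard, h1, ha]
      simp only [Nat.choose_self, Nat.cast_one, mul_one, sub_self, zero_mul, sub_zero]
      field_simp
    · by_cases h0 : C = ∅
      · subst h0
        rw [if_neg h1, if_pos rfl]
        simp only [Finset.card_empty, Nat.cast_zero, zero_mul, zero_sub, sub_zero, ha]
        rw [Nat.choose_zero_right]
        push_cast
        field_simp
      · -- middle case : coefficient is zero
        set s := C.card with hs
        have hs1 : 1 ≤ s := Finset.card_pos.mpr (Finset.nonempty_iff_ne_empty.mpr h0)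
        have hsn : s < n := Finset.card_lt_card (Finset.ssubset_iff_subset_ne.mpr ⟨hCM, h1⟩)
        have hid : (n - 1).choose s * s = (n - 1).choose (s - 1) * (n - s) := by
          have := Nat.choose_succ_right_eq (n - 1) (s - 1)
          have h2 : s - 1 + 1 = s := by omega
          have h3 : n - 1 - (s - 1) = n - s := by omega
          rw [h2, h3] at this
          exact this
        have hc1 : ((n - 1).choose (s - 1) : ℝ) ≠ 0 :=
          Nat.cast_ne_zero.mpr (Nat.choose_pos (by omega)).ne'
        have hc2 : ((n - 1).choose s : ℝ) ≠ 0 :=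
          Nat.cast_ne_zero.mpr (Nat.choose_pos (by omega)).ne'
        have hzero : (s : ℝ) * a (s - 1) - ((n : ℝ) - s) * a s = 0 := by
          rw [ha]
          have hid' : ((n - 1).choose s : ℝ) * s = ((n - 1).choose (s - 1) : ℝ) * ((n : ℝ) - s) := by
            have := congrArg (Nat.cast (R := ℝ)) hid
            push_cast [Nat.cast_sub hsn.le] at this
            linarith
          field_simp
          nlinarith [hid']
        rw [if_neg h1, if_neg h0, hzero, zero_mul, sub_zero]
  calc ∑ i ∈ M, ∑ S ∈ (M.erase i).powerset,
      ((1 : ℝ) / (M.card * (M.card - 1).choose S.card)) * (w (S ∪ {i}) - w S)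
      = ∑ i ∈ M, ∑ S ∈ (M.erase i).powerset, a S.card * (w (S ∪ {i}) - w S) := rfl
    _ = ∑ C ∈ M.powerset,
          ((C.card : ℝ) * a (C.card - 1) - ((n : ℝ) - C.card) * a C.card) * w C := split
    _ = ∑ C ∈ M.powerset,
          ((if C = M then w M else 0) - (if C = ∅ then w ∅ else 0)) :=
        Finset.sum_congr rfl key
    _ = w M - w ∅ := by
        rw [Finset.sum_sub_distrib]
        rw [Finset.sum_ite_eq' M.powerset M (fun _ => w M),
          Finset.sum_ite_eq' M.powerset ∅ (fun _ => w ∅)]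
        simp [Finset.mem_powerset_self, Finset.empty_mem_powerset]

/-- Efficiency of the Owen value: the Owen values of all players sum to
`v N - v ∅`. -/
theorem owen_efficiency {α : Type*} [DecidableEq α]
    (N : Finset α) (v : Finset α → ℝ) (K : ℕ) (hK : 0 < K)
    (G : Fin K → Finset α)
    (hne : ∀ k, (G k).Nonempty)
    (hdisj : ∀ k k', k ≠ k' → Disjoint (G k) (G k'))
    (hcover : Finset.univ.biUnion G = N) :
    ∑ k : Fin K, ∑ i ∈ G k,
      ∑ T ∈ (Finset.univ.erase k).powerset, ∑ S ∈ ((G k).erase i).powerset,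
        ((1 : ℝ) / (K * (K - 1).choose T.card)) *
          ((1 : ℝ) / ((G k).card * ((G k).card - 1).choose S.card)) *
          (v (T.biUnion G ∪ S ∪ {i}) - v (T.biUnion G ∪ S))
      = v N - v ∅ := by
  classical
  have hKfin : (Finset.univ : Finset (Fin K)).Nonempty := by
    have : Nonempty (Fin K) := ⟨⟨0, hK⟩⟩
    exact Finset.univ_nonempty
  have inner : ∀ (k : Fin K) (T : Finset (Fin K)),
      ∑ i ∈ G k, ∑ S ∈ ((G k).erase i).powerset,
        ((1 : ℝ) / ((G k).card * ((G k).card - 1).choose S.card)) *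
          (v (T.biUnion G ∪ S ∪ {i}) - v (T.biUnion G ∪ S))
      = v (T.biUnion G ∪ G k) - v (T.biUnion G) := by
    intro k T
    have h := shapley_eff (G k) (hne k) (fun S => v (T.biUnion G ∪ S))
    simpa [Finset.union_assoc, Finset.union_empty] using h
  have main := shapley_eff (Finset.univ : Finset (Fin K)) hKfin (fun T => v (T.biUnion G))
  simp only [Finset.card_univ, Fintype.card_fin] at main
  calc ∑ k : Fin K, ∑ i ∈ G k,
      ∑ T ∈ (Finset.univ.erase k).powerset, ∑ S ∈ ((G k).erase i).powerset,
        ((1 : ℝ) / (K * (K - 1).choose T.card)) *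
          ((1 : ℝ) / ((G k).card * ((G k).card - 1).choose S.card)) *
          (v (T.biUnion G ∪ S ∪ {i}) - v (T.biUnion G ∪ S))
      = ∑ k : Fin K, ∑ T ∈ (Finset.univ.erase k).powerset,
          ((1 : ℝ) / (K * (K - 1).choose T.card)) *
            (v (T.biUnion G ∪ G k) - v (T.biUnion G)) := by
        refine Finset.sum_congr rfl fun k _ => ?_
        rw [Finset.sum_comm]
        refine Finset.sum_congr rfl fun T _ => ?_
        rw [← inner k T, Finset.mul_sum]
        refine Finset.sum_congr rfl fun i _ => ?_
        rw [Finset.mul_sum]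
        refine Finset.sum_congr rfl fun S _ => ?_
        ring
    _ = ∑ k : Fin K, ∑ T ∈ (Finset.univ.erase k).powerset,
          ((1 : ℝ) / (K * (K - 1).choose T.card)) *
            (v ((T ∪ {k}).biUnion G) - v (T.biUnion G)) := by
        refine Finset.sum_congr rfl fun k _ => Finset.sum_congr rfl fun T _ => ?_
        have h : (T ∪ {k}).biUnion G = T.biUnion G ∪ G k := by
          ext a; simp only [Finset.mem_biUnion, Finset.mem_union, Finset.mem_singleton]; aesop
        rw [h]
    _ = v N - v ∅ := by
        rw [main]
        simp [hcover]
end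

section
/- Block efficiency of the Owen value: for any block G_k of the partition, the sum of Owen values of the players in G_k equals the (quotient-game) Shapley value of block k in the game v_Q defined on the index set {1,…,K} by v_Q(T) = v(∪_{m∈T} G_m); that is, ∑_{i ∈ G_k} φ_i^O = ∑_{T ⊆ {1..K}\{k}} [1/(K·C(K-1,|T|))]·(v_Q(T ∪ {k}) − v_Q(T)). -/
/-!
For a fixed coalition `T` of other blocks, the Owen weight of `(T, S)` factors as the Shapley
weight of `T` in the quotient game times the Shapley weight of `S` inside `G k`. Summing over
`i ∈ G k` therefore gives the quotient weight of `T` times the sum of the Shapley values of the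
game `S ↦ v (⋃ T ∪ S)` on `G k`, which by efficiency is `v (⋃ T ∪ G k) - v (⋃ T)`.

Efficiency is double counting: a coalition `A ⊆ M` appears as the larger coalition of a
marginal contribution `#A` times and as the smaller one `#M - #A` times, and both totals weigh
`u A` by `1 / (#M).choose #A`; only `u M` and `u ∅` are left uncancelled.
-/

open Finset

namespace Finset

variable {α β : Type*} [DecidableEq α] [AddCommMonoid β]

theorem sum_sum_powerset_erase (M : Finset α) (f : Finset α → β) :
    ∑ i ∈ M, ∑ S ∈ (M.erase i).powerset, f S = ∑ S ∈ M.powerset, (#M - #S) • f S := by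
  rw [sum_comm' (t' := M.powerset) (s' := fun S => M \ S) (by grind)]
  refine sum_congr rfl fun S hS => ?_
  rw [sum_const, card_sdiff_of_subset (mem_powerset.mp hS)]

theorem sum_sum_powerset_erase_insert (M : Finset α) (f : Finset α → β) :
    ∑ i ∈ M, ∑ S ∈ (M.erase i).powerset, f (insert i S) = ∑ A ∈ M.powerset, #A • f A := by
  have hinner : ∀ i ∈ M, ∑ S ∈ (M.erase i).powerset, f (insert i S)
      = ∑ A ∈ M.powerset with i ∈ A, f A := fun i _ =>
    sum_nbij' (insert i) (·.erase i) (by grind) (by grind) (by grind) (by grind) (fun _ _ => rfl)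
  rw [sum_congr rfl hinner, sum_comm' (t' := M.powerset) (s' := id) (by grind)]
  exact sum_congr rfl fun A _ => sum_const _

end Finset

noncomputable section

/-- The probability that, in a uniformly random ordering of `n` players, a given player is preceded
by exactly a given set of `s` others. -/
def shapleyWeight (n s : ℕ) : ℝ := 1 / (n * (n - 1).choose s)

theorem card_mul_shapleyWeight_pred {n s : ℕ} (hs : 0 < s) (hsn : s ≤ n) :
    s * shapleyWeight n (s - 1) = 1 / n.choose s := by
  obtain ⟨r, rfl⟩ := Nat.exists_eq_add_one_of_ne_zero hs.ne'
  obtain ⟨m, rfl⟩ := Nat.exists_eq_add_one_of_ne_zero (hs.trans_le hsn).ne'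
  have h : ((m + 1 : ℕ) : ℝ) * m.choose r = (m + 1).choose (r + 1) * (r + 1 : ℕ) := by
    exact_mod_cast Nat.add_one_mul_choose_eq m r
  have hc : ((m + 1).choose (r + 1) : ℝ) ≠ 0 := by
    exact_mod_cast (Nat.choose_pos hsn).ne'
  have hc' : (m.choose r : ℝ) ≠ 0 := by
    exact_mod_cast (Nat.choose_pos (by omega)).ne'
  simp only [shapleyWeight, Nat.add_sub_cancel]
  field_simp
  linarith

theorem sub_mul_shapleyWeight {n s : ℕ} (h : s < n) :
    ((n - s : ℕ) : ℝ) * shapleyWeight n s = 1 / n.choose s := by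
  obtain ⟨m, rfl⟩ := Nat.exists_eq_add_one_of_ne_zero (Nat.zero_lt_of_lt h).ne'
  have hmul : (m.choose s : ℝ) * (m + 1 : ℕ) = (m + 1).choose s * (m + 1 - s : ℕ) := by
    exact_mod_cast Nat.choose_mul_succ_eq m s
  have hc : ((m + 1).choose s : ℝ) ≠ 0 := by
    exact_mod_cast (Nat.choose_pos h.le).ne'
  have hc' : (m.choose s : ℝ) ≠ 0 := by
    exact_mod_cast (Nat.choose_pos (by omega)).ne'
  simp only [shapleyWeight, Nat.add_sub_cancel]
  field_simp
  linarith

variable {α : Type*} [DecidableEq α]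

def shapleyValue (M : Finset α) (u : Finset α → ℝ) (i : α) : ℝ :=
  ∑ S ∈ (M.erase i).powerset, shapleyWeight #M #S * (u (S ∪ {i}) - u S)

theorem sum_shapleyValue (M : Finset α) (u : Finset α → ℝ) :
    ∑ i ∈ M, shapleyValue M u i = u M - u ∅ := by
  set t : Finset α → ℝ := fun A => u A / (#M).choose #A
  have hgain : ∑ i ∈ M, ∑ S ∈ (M.erase i).powerset, shapleyWeight #M #S * u (S ∪ {i})
      = ∑ A ∈ M.powerset.erase ∅, t A := calc
    _ = ∑ i ∈ M, ∑ S ∈ (M.erase i).powerset,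
          shapleyWeight #M (#(insert i S) - 1) * u (insert i S) :=
      sum_congr rfl fun i _ => sum_congr rfl fun S _ => by
        rw [card_insert_of_notMem (by grind), Nat.add_sub_cancel, union_singleton]
    _ = ∑ A ∈ M.powerset, #A • (shapleyWeight #M (#A - 1) * u A) :=
      sum_sum_powerset_erase_insert M fun A => shapleyWeight #M (#A - 1) * u A
    _ = ∑ A ∈ M.powerset.erase ∅, #A • (shapleyWeight #M (#A - 1) * u A) :=
      (sum_erase _ (by simp)).symm
    _ = ∑ A ∈ M.powerset.erase ∅, t A := sum_congr rfl fun A hA => by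
        obtain ⟨hA, hAM⟩ := mem_erase.mp hA
        rw [nsmul_eq_mul, ← mul_assoc, card_mul_shapleyWeight_pred
          (card_pos.mpr (nonempty_iff_ne_empty.mpr hA)) (card_le_card (mem_powerset.mp hAM))]
        simp only [t, one_div_mul_eq_div]
  have hloss : ∑ i ∈ M, ∑ S ∈ (M.erase i).powerset, shapleyWeight #M #S * u S
      = ∑ A ∈ M.powerset.erase M, t A := calc
    _ = ∑ A ∈ M.powerset, (#M - #A) • (shapleyWeight #M #A * u A) :=
      sum_sum_powerset_erase M _
    _ = ∑ A ∈ M.powerset.erase M, (#M - #A) • (shapleyWeight #M #A * u A) :=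
      (sum_erase _ (by simp)).symm
    _ = ∑ A ∈ M.powerset.erase M, t A := sum_congr rfl fun A hA => by
        obtain ⟨hA, hAM⟩ := mem_erase.mp hA
        rw [nsmul_eq_mul, ← mul_assoc, sub_mul_shapleyWeight
          (card_lt_card (Finset.ssubset_iff_subset_ne.mpr ⟨mem_powerset.mp hAM, hA⟩))]
        simp only [t, one_div_mul_eq_div]
  have hfull : ∑ A ∈ M.powerset.erase M, t A + u M = ∑ A ∈ M.powerset, t A := by
    rw [← sum_erase_add _ _ (mem_powerset_self M)]
    simp [t]
  have hempty : ∑ A ∈ M.powerset.erase ∅, t A + u ∅ = ∑ A ∈ M.powerset, t A := by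
    rw [← sum_erase_add _ _ (empty_mem_powerset M)]
    simp [t]
  simp only [shapleyValue, mul_sub, sum_sub_distrib, hgain, hloss]
  linarith

end

theorem owen_block_efficiency_general {α : Type*} [DecidableEq α]
    (v : Finset α → ℝ) (K : ℕ)
    (G : Fin K → Finset α)
    (k : Fin K) :
    ∑ i ∈ G k,
      ∑ T ∈ (Finset.univ.erase k).powerset, ∑ S ∈ ((G k).erase i).powerset,
        ((1 : ℝ) / (K * (K - 1).choose T.card)) *
          ((1 : ℝ) / ((G k).card * ((G k).card - 1).choose S.card)) *
          (v (T.biUnion G ∪ S ∪ {i}) - v (T.biUnion G ∪ S))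
      = ∑ T ∈ (Finset.univ.erase k).powerset,
          ((1 : ℝ) / (K * (K - 1).choose T.card)) *
            (v ((insert k T).biUnion G) - v (T.biUnion G)) := by
  rw [sum_comm]
  refine sum_congr rfl fun T _ => ?_
  calc _ = shapleyWeight K #T *
        ∑ i ∈ G k, shapleyValue (G k) (fun S => v (T.biUnion G ∪ S)) i := by
        simp only [shapleyValue, shapleyWeight, mul_sum, mul_assoc, union_assoc]
    _ = _ := by
        rw [sum_shapleyValue, union_empty, biUnion_insert, union_comm, shapleyWeight]

/-- Block efficiency of the Owen value: the Owen values of the players of a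
block `G k` sum to the Shapley value of block `k` in the quotient game
`v_Q(T) = v(∪_{m ∈ T} G m)`. -/
theorem owen_block_efficiency {α : Type*} [DecidableEq α]
    (N : Finset α) (v : Finset α → ℝ) (K : ℕ) (hK : 0 < K)
    (G : Fin K → Finset α)
    (hne : ∀ k, (G k).Nonempty)
    (hdisj : ∀ k k', k ≠ k' → Disjoint (G k) (G k'))
    (hcover : Finset.univ.biUnion G = N)
    (k : Fin K) :
    ∑ i ∈ G k,
      ∑ T ∈ (Finset.univ.erase k).powerset, ∑ S ∈ ((G k).erase i).powerset,
        ((1 : ℝ) / (K * (K - 1).choose T.card)) *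
          ((1 : ℝ) / ((G k).card * ((G k).card - 1).choose S.card)) *
          (v (T.biUnion G ∪ S ∪ {i}) - v (T.biUnion G ∪ S))
      = ∑ T ∈ (Finset.univ.erase k).powerset,
          ((1 : ℝ) / (K * (K - 1).choose T.card)) *
            (v ((insert k T).biUnion G) - v (T.biUnion G)) :=
  owen_block_efficiency_general v K G k
end
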